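/- Every bounded radial solution φ of -Δφ = (8/(1+|x|²)²)·φ on ℝ² is a constant multiple of Z_0(x) = (|x|² - 1)/(|x|² + 1). -/

import Mathlib

/-!
Besides `Z₀`, the radial equation has the explicit solution `Y₀ = Z₀ log r - 2 / (r² + 1)`, and
`r W(Z₀, Y₀) = 1`. By Abel's identity `r W(f, g)` is constant for any two solutions, so every solution
is `φ = a Z₀ + b Y₀` with `a = r W(φ, Y₀)` and `b = r W(Z₀, φ)`. As `Y₀` grows like `log r`, a bounded
`φ` has `b = 0`.
-/

open Real Set Filter Topology

noncomputable section

namespace LinearizedLiouville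

/-- The radial profile `f` of a function on `ℝ²` solves `-Δu = q u`, with `f'`, `f''` the derivatives
of `f`. -/
def IsRadialSolution (q f f' f'' : ℝ → ℝ) : Prop :=
  ∀ r ∈ Ioi (0 : ℝ), HasDerivAt f (f' r) r ∧ HasDerivAt f' (f'' r) r ∧
    f'' r + f' r / r + q r * f r = 0

def radialWronskian (f f' g g' : ℝ → ℝ) (r : ℝ) : ℝ := r * (f r * g' r - f' r * g r)

variable {q f f' f'' g g' g'' : ℝ → ℝ}

theorem IsRadialSolution.hasDerivAt_radialWronskian (hf : IsRadialSolution q f f' f'')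
    (hg : IsRadialSolution q g g' g'') {r : ℝ} (hr : r ∈ Ioi 0) :
    HasDerivAt (radialWronskian f f' g g') 0 r := by
  obtain ⟨hf₁, hf₂, hf₃⟩ := hf r hr
  obtain ⟨hg₁, hg₂, hg₃⟩ := hg r hr
  have hr₀ : r ≠ 0 := ne_of_gt hr
  have hf'' : f'' r = -(f' r / r) - q r * f r := by linarith
  have hg'' : g'' r = -(g' r / r) - q r * g r := by linarith
  refine ((hasDerivAt_id r).mul ((hf₁.mul hg₂).sub (hf₂.mul hg₁))).congr_deriv ?_
  rw [hf'', hg'']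
  simp only [id, Pi.sub_apply, Pi.mul_apply]
  field_simp
  ring

theorem IsRadialSolution.exists_radialWronskian_eq (hf : IsRadialSolution q f f' f'')
    (hg : IsRadialSolution q g g' g'') :
    ∃ C, ∀ r ∈ Ioi (0 : ℝ), radialWronskian f f' g g' r = C :=
  isOpen_Ioi.exists_is_const_of_deriv_eq_zero isPreconnected_Ioi
    (fun _ hr => (hf.hasDerivAt_radialWronskian hg hr).differentiableAt.differentiableWithinAt)
    (fun _ hr => (hf.hasDerivAt_radialWronskian hg hr).deriv)

theorem IsRadialSolution.exists_eq_add_of_radialWronskian_eq_one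
    (hf : IsRadialSolution q f f' f'') (hg : IsRadialSolution q g g' g'')
    (hfg : ∀ r ∈ Ioi (0 : ℝ), radialWronskian f f' g g' r = 1)
    {φ φ' φ'' : ℝ → ℝ} (hφ : IsRadialSolution q φ φ' φ'') :
    ∃ a b : ℝ, ∀ r ∈ Ioi (0 : ℝ), φ r = a * f r + b * g r := by
  obtain ⟨a, ha⟩ := hφ.exists_radialWronskian_eq hg
  obtain ⟨b, hb⟩ := hf.exists_radialWronskian_eq hφ
  refine ⟨a, b, fun r hr => ?_⟩
  rw [← ha r hr, ← hb r hr]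
  have h := hfg r hr
  unfold radialWronskian at h ⊢
  linear_combination (-φ r) * h

/-- The weight `e^U` of the linearized Liouville equation. -/
def potential (r : ℝ) : ℝ := 8 / (1 + r ^ 2) ^ 2

def Z₀ (r : ℝ) : ℝ := (r ^ 2 - 1) / (r ^ 2 + 1)

def Z₀' (r : ℝ) : ℝ := 4 * r / (r ^ 2 + 1) ^ 2

def Z₀'' (r : ℝ) : ℝ := (4 - 12 * r ^ 2) / (r ^ 2 + 1) ^ 3

/-- Reduction of order: `Y₀ = Z₀ (log r - 2 / (r² - 1))`. -/
def Y₀ (r : ℝ) : ℝ := Z₀ r * log r - 2 / (r ^ 2 + 1)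

def Y₀' (r : ℝ) : ℝ := Z₀' r * log r + Z₀ r / r + Z₀' r

def Y₀'' (r : ℝ) : ℝ := Z₀'' r * log r + 2 * Z₀' r / r - Z₀ r / r ^ 2 + Z₀'' r

theorem hasDerivAt_Z₀ (r : ℝ) : HasDerivAt Z₀ (Z₀' r) r := by
  have h := ((hasDerivAt_pow 2 r).sub_const 1).div ((hasDerivAt_pow 2 r).add_const 1)
    (by positivity : r ^ 2 + 1 ≠ 0)
  refine h.congr_deriv ?_
  unfold Z₀'
  field_simp
  ring

theorem hasDerivAt_Z₀' (r : ℝ) : HasDerivAt Z₀' (Z₀'' r) r := by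
  have h := ((hasDerivAt_id r).const_mul 4).div (((hasDerivAt_pow 2 r).add_const 1).pow 2)
    (by positivity : (r ^ 2 + 1) ^ 2 ≠ 0)
  refine h.congr_deriv ?_
  unfold Z₀''
  simp only [id, Pi.pow_apply]
  field_simp
  ring

theorem hasDerivAt_Y₀ {r : ℝ} (hr : r ≠ 0) : HasDerivAt Y₀ (Y₀' r) r := by
  have h := ((hasDerivAt_Z₀ r).mul (hasDerivAt_log hr)).sub
    ((hasDerivAt_const r (2 : ℝ)).div ((hasDerivAt_pow 2 r).add_const 1)
      (by positivity : r ^ 2 + 1 ≠ 0))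
  refine h.congr_deriv ?_
  unfold Y₀' Z₀'
  field_simp
  ring

theorem hasDerivAt_Y₀' {r : ℝ} (hr : r ≠ 0) : HasDerivAt Y₀' (Y₀'' r) r := by
  have h := (((hasDerivAt_Z₀' r).mul (hasDerivAt_log hr)).add
    ((hasDerivAt_Z₀ r).div (hasDerivAt_id r) hr)).add (hasDerivAt_Z₀' r)
  refine h.congr_deriv ?_
  unfold Y₀''
  simp only [id]
  field_simp
  ring

theorem isRadialSolution_Z₀ : IsRadialSolution potential Z₀ Z₀' Z₀'' := by
  refine fun r hr => ⟨hasDerivAt_Z₀ r, hasDerivAt_Z₀' r, ?_⟩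
  have hr₀ : r ≠ 0 := ne_of_gt hr
  unfold potential Z₀ Z₀' Z₀''
  field_simp
  ring

theorem isRadialSolution_Y₀ : IsRadialSolution potential Y₀ Y₀' Y₀'' := by
  refine fun r hr => ⟨hasDerivAt_Y₀ (ne_of_gt hr), hasDerivAt_Y₀' (ne_of_gt hr), ?_⟩
  have hr₀ : r ≠ 0 := ne_of_gt hr
  unfold potential Y₀ Y₀' Y₀'' Z₀ Z₀' Z₀''
  field_simp
  ring

theorem radialWronskian_Z₀_Y₀ {r : ℝ} (hr : r ≠ 0) : radialWronskian Z₀ Z₀' Y₀ Y₀' r = 1 := by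
  unfold radialWronskian Y₀ Y₀' Z₀ Z₀'
  field_simp
  ring

theorem isRadialSolution_of_contDiffOn {q φ : ℝ → ℝ} (hreg : ContDiffOn ℝ 2 φ (Ioi 0))
    (heq : ∀ r ∈ Ioi (0 : ℝ), -(deriv (deriv φ) r + (1 / r) * deriv φ r) = q r * φ r) :
    IsRadialSolution q φ (deriv φ) (deriv (deriv φ)) := by
  have hφ' : ContDiffOn ℝ 1 (deriv φ) (Ioi 0) := hreg.deriv_of_isOpen isOpen_Ioi (by norm_num)
  refine fun r hr => ⟨?_, ?_, ?_⟩
  · exact ((hreg.differentiableOn (by norm_num)).differentiableAt (Ioi_mem_nhds hr)).hasDerivAt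
  · exact ((hφ'.differentiableOn (by norm_num)).differentiableAt (Ioi_mem_nhds hr)).hasDerivAt
  · linarith [heq r hr, one_div_mul_eq_div r (deriv φ r)]

theorem abs_Z₀_le_one (r : ℝ) : |Z₀ r| ≤ 1 := by
  rw [Z₀, abs_div, abs_of_pos (by positivity : 0 < r ^ 2 + 1), div_le_one (by positivity)]
  exact abs_le.2 ⟨by nlinarith, by linarith⟩

theorem tendsto_two_div_sq_add_one_atTop : Tendsto (fun r : ℝ => 2 / (r ^ 2 + 1)) atTop (𝓝 0) :=
  tendsto_const_nhds.div_atTop <| tendsto_atTop_add_const_right _ 1 <|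
    tendsto_pow_atTop two_ne_zero

theorem tendsto_Z₀_atTop : Tendsto Z₀ atTop (𝓝 1) := by
  have h := (tendsto_const_nhds (x := (1 : ℝ))).sub tendsto_two_div_sq_add_one_atTop
  refine (sub_zero (1 : ℝ) ▸ h).congr fun r => ?_
  unfold Z₀
  field_simp
  ring

theorem tendsto_Y₀_atTop : Tendsto Y₀ atTop atTop := by
  have h := (tendsto_Z₀_atTop.pos_mul_atTop one_pos tendsto_log_atTop).atTop_add
    tendsto_two_div_sq_add_one_atTop.neg
  exact h.congr fun r => (sub_eq_add_neg _ _).symm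

theorem eq_zero_of_tendsto_atTop_of_abs_mul_le {f : ℝ → ℝ} (hf : Tendsto f atTop atTop)
    {b C : ℝ} (h : ∀ᶠ r in atTop, |b * f r| ≤ C) : b = 0 := by
  by_contra hb
  have hbf : Tendsto (fun r => |b * f r|) atTop atTop := by
    simp only [abs_mul]
    exact (tendsto_abs_atTop_atTop.comp hf).const_mul_atTop (abs_pos.2 hb)
  obtain ⟨r, hr₁, hr₂⟩ := ((hbf.eventually_gt_atTop C).and h).exists
  linarith

end LinearizedLiouville

end

open LinearizedLiouville in
/-- Every bounded radial solution of `-Δφ = (8/(1+r²)²) φ` on `ℝ²` is a constant multiple of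
`Z₀(r) = (r²-1)/(r²+1)` (stated for the radial profile). -/
theorem stmt_4 (φ : ℝ → ℝ)
    (hreg : ContDiffOn ℝ 2 φ (Set.Ioi 0))
    (heq : ∀ r ∈ Set.Ioi (0 : ℝ),
      -(deriv (deriv φ) r + (1 / r) * deriv φ r) = (8 / (1 + r ^ 2) ^ 2) * φ r)
    (hbdd : ∃ M : ℝ, ∀ r ∈ Set.Ioi (0 : ℝ), |φ r| ≤ M) :
    ∃ c : ℝ, ∀ r ∈ Set.Ioi (0 : ℝ), φ r = c * ((r ^ 2 - 1) / (r ^ 2 + 1)) := by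
  obtain ⟨M, hM⟩ := hbdd
  obtain ⟨a, b, hφ⟩ := isRadialSolution_Z₀.exists_eq_add_of_radialWronskian_eq_one
    isRadialSolution_Y₀ (fun r hr => radialWronskian_Z₀_Y₀ (ne_of_gt hr))
    (isRadialSolution_of_contDiffOn (q := potential) hreg heq)
  have hb : b = 0 := by
    refine eq_zero_of_tendsto_atTop_of_abs_mul_le tendsto_Y₀_atTop (C := M + |a|) ?_
    filter_upwards [eventually_gt_atTop 0] with r hr
    calc |b * Y₀ r| = |φ r - a * Z₀ r| := by rw [hφ r hr, add_sub_cancel_left]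
      _ ≤ |φ r| + |a| * |Z₀ r| := by rw [← abs_mul]; exact abs_sub _ _
      _ ≤ M + |a| :=
        add_le_add (hM r hr) (mul_le_of_le_one_right (abs_nonneg a) (abs_Z₀_le_one r))
  exact ⟨a, fun r hr => by simpa [hb, Z₀] using hφ r hr⟩
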